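/- arXiv:1409.4433 — 4 statements merged into one kernel-verified Lean document; each statement's English description precedes it below -/
import Mathlib

section
/- Let I be a set of colours, V a set of vertices with a colouring cl : V → I, and for each i ∈ I a linear order ≤ᵢ on the class cl⁻¹(i). Let A be a symmetric adjacency relation on V such that A(u, v) only holds when cl(u) ≠ cl(v), and suppose (interval-monotonicity): (a) for every vertex p and every three vertices q₁ ≤ q₂ ≤ q₃ of a common colour class different from cl(p), if A(p, q₁) and A(p, q₃) then A(p, q₂); and (b) for all p₁ ≤ p₂ in one colour class and q₁ ≤ q₂ in a different colour class, if A(p₁, q₂) and A(p₂, q₁) then A(p₁, q₁) and A(p₂, q₂). Let ℓ ≥ 1 and let K₁, …, K_ℓ : I → V be rainbow cliques, i.e., cl(K_t(i)) = i for every i and A(K_t(i), K_t(j)) for all i ≠ j. Define m : I → V by letting m(i) be the ≤ᵢ-minimum of {K₁(i), …, K_ℓ(i)}. Then m is a rainbow clique: A(m(i), m(j)) for all i ≠ j. -/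
/-- minimum of rainbow cliques is a rainbow clique:
Given a multicoloured graph with colouring `cl : V → I`, a linear order `le i`
on each colour class `cl⁻¹ i`, a symmetric adjacency relation `A` relating only
vertices of distinct colours and satisfying the interval-monotonicity
conditions, and rainbow cliques `K₁, …, K_ℓ` (`ℓ ≥ 1`), the colourwise minimum
`m` of `K₁, …, K_ℓ` is again a rainbow clique. -/
theorem stmt7 {I V : Type*} (cl : V → I) (le : I → V → V → Prop)
    -- `le i` is a linear order on the colour class `cl⁻¹ i`:
    (le_refl : ∀ i v, cl v = i → le i v v)
    (le_antisymm : ∀ i u v, cl u = i → cl v = i → le i u v → le i v u → u = v)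
    (le_trans : ∀ i u v w, cl u = i → cl v = i → cl w = i →
      le i u v → le i v w → le i u w)
    (le_total : ∀ i u v, cl u = i → cl v = i → le i u v ∨ le i v u)
    -- adjacency:
    (A : V → V → Prop)
    (hA_symm : ∀ u v, A u v → A v u)
    (hA_col : ∀ u v, A u v → cl u ≠ cl v)
    -- interval-monotonicity (a):
    (hIMa : ∀ (p q₁ q₂ q₃ : V) (i : I), cl q₁ = i → cl q₂ = i → cl q₃ = i →
      cl p ≠ i → le i q₁ q₂ → le i q₂ q₃ → A p q₁ → A p q₃ → A p q₂)
    -- interval-monotonicity (b):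
    (hIMb : ∀ (p₁ p₂ q₁ q₂ : V) (i j : I), i ≠ j →
      cl p₁ = i → cl p₂ = i → cl q₁ = j → cl q₂ = j →
      le i p₁ p₂ → le j q₁ q₂ → A p₁ q₂ → A p₂ q₁ → A p₁ q₁ ∧ A p₂ q₂)
    -- the rainbow cliques `K₁, …, K_ℓ`, `ℓ ≥ 1`:
    (ℓ : ℕ) (hℓ : 1 ≤ ℓ) (K : Fin ℓ → I → V)
    (hKcl : ∀ t i, cl (K t i) = i)
    (hKadj : ∀ t (i j : I), i ≠ j → A (K t i) (K t j))
    -- `m i` is the `le i`-minimum of `{K₁ i, …, K_ℓ i}`: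
    (m : I → V)
    (hm_mem : ∀ i, ∃ t, m i = K t i)
    (hm_min : ∀ i t, le i (m i) (K t i)) :
    ∀ i j : I, i ≠ j → A (m i) (m j) := by
  intro i j hij
  obtain ⟨t, ht⟩ := hm_mem i
  obtain ⟨s, hs⟩ := hm_mem j
  have h := hIMb (m i) (K s i) (m j) (K t j) i j hij
    (ht ▸ hKcl t i) (hKcl s i) (hs ▸ hKcl s j) (hKcl t j)
    (hm_min i s) (hm_min j t)
    (ht ▸ hKadj t i j hij) (hs ▸ hKadj s i j hij)
  exact h.1
end

section
/- Let I be a finite set of colours, V a finite set of vertices with a colouring cl : V → I, and for each i ∈ I a linear order ≤ᵢ on the class cl⁻¹(i). Let A be a symmetric adjacency relation on V such that A(u, v) only holds when cl(u) ≠ cl(v), and suppose the interval-monotonicity conditions hold: (a) for every vertex p and every q₁ ≤ q₂ ≤ q₃ of a common colour class different from cl(p), if A(p, q₁) and A(p, q₃) then A(p, q₂); and (b) for all p₁ ≤ p₂ in one colour class and q₁ ≤ q₂ in a different colour class, if A(p₁, q₂) and A(p₂, q₁) then A(p₁, q₁) and A(p₂, q₂). If there exists at least one rainbow clique, then there exists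 a rainbow clique m such that for every rainbow clique K and every i ∈ I, m(i) ≤ᵢ K(i). -/
/-- In a finite interval-monotone multicoloured graph, if there is
a rainbow clique at all, then there is a colourwise `le`-least rainbow
clique. -/
theorem stmt8 {I V : Type*} [Fintype I] [Fintype V]
    (cl : V → I) (le : I → V → V → Prop)
    -- `le i` is a linear order on the colour class `cl⁻¹ i`:
    (le_refl : ∀ i v, cl v = i → le i v v)
    (le_antisymm : ∀ i u v, cl u = i → cl v = i → le i u v → le i v u → u = v)
    (le_trans : ∀ i u v w, cl u = i → cl v = i → cl w = i →
      le i u v → le i v w → le i u w)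
    (le_total : ∀ i u v, cl u = i → cl v = i → le i u v ∨ le i v u)
    -- adjacency:
    (A : V → V → Prop)
    (hA_symm : ∀ u v, A u v → A v u)
    (hA_col : ∀ u v, A u v → cl u ≠ cl v)
    -- interval-monotonicity (a):
    (hIMa : ∀ (p q₁ q₂ q₃ : V) (i : I), cl q₁ = i → cl q₂ = i → cl q₃ = i →
      cl p ≠ i → le i q₁ q₂ → le i q₂ q₃ → A p q₁ → A p q₃ → A p q₂)
    -- interval-monotonicity (b):
    (hIMb : ∀ (p₁ p₂ q₁ q₂ : V) (i j : I), i ≠ j →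
      cl p₁ = i → cl p₂ = i → cl q₁ = j → cl q₂ = j →
      le i p₁ p₂ → le j q₁ q₂ → A p₁ q₂ → A p₂ q₁ → A p₁ q₁ ∧ A p₂ q₂)
    -- there is at least one rainbow clique:
    (hex : ∃ s : I → V, (∀ i, cl (s i) = i) ∧ ∀ i j : I, i ≠ j → A (s i) (s j)) :
    ∃ m : I → V, ((∀ i, cl (m i) = i) ∧ ∀ i j : I, i ≠ j → A (m i) (m j)) ∧
      ∀ K : I → V, ((∀ i, cl (K i) = i) ∧ ∀ i j : I, i ≠ j → A (K i) (K j)) →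
        ∀ i, le i (m i) (K i) := by
  classical
  obtain ⟨s₀, hs₀⟩ := hex
  set P : (I → V) → Prop :=
    fun s => (∀ i, cl (s i) = i) ∧ ∀ i j : I, i ≠ j → A (s i) (s j) with hP
  set mn : (I → V) → (I → V) → (I → V) :=
    fun s t i => if le i (s i) (t i) then s i else t i with hmn
  have hmn_cl : ∀ s t : I → V, P s → P t → ∀ i, cl (mn s t i) = i := by
    intro s t hs ht i
    simp only [hmn]
    split
    · exact hs.1 i
    · exact ht.1 i
  have hmn_le_left : ∀ s t : I → V, P s → P t → ∀ i, le i (mn s t i) (s i) := by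
    intro s t hs ht i
    simp only [hmn]
    split
    · exact le_refl i (s i) (hs.1 i)
    · rcases le_total i (s i) (t i) (hs.1 i) (ht.1 i) with h | h
      · exact absurd h ‹¬ _›
      · exact h
  have hmn_le_right : ∀ s t : I → V, P s → P t → ∀ i, le i (mn s t i) (t i) := by
    intro s t hs ht i
    simp only [hmn]
    split
    · assumption
    · exact le_refl i (t i) (ht.1 i)
  have hmn_P : ∀ s t : I → V, P s → P t → P (mn s t) := by
    intro s t hs ht
    refine ⟨hmn_cl s t hs ht, ?_⟩
    intro i j hij
    simp only [hmn]
    split <;> split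
    · exact hs.2 i j hij
    · -- A (s i) (t j), with le i (s i) (t i), le j (t j) (s j)
      have hji : le j (t j) (s j) := by
        rcases le_total j (s j) (t j) (hs.1 j) (ht.1 j) with h | h
        · exact absurd h ‹¬ _›
        · exact h
      exact (hIMb (s i) (t i) (t j) (s j) i j hij (hs.1 i) (ht.1 i) (ht.1 j)
        (hs.1 j) ‹le i (s i) (t i)› hji (hs.2 i j hij) (ht.2 i j hij)).1
    · -- A (t i) (s j), with le i (t i) (s i), le j (s j) (t j)
      have hii : le i (t i) (s i) := by
        rcases le_total i (s i) (t i) (hs.1 i) (ht.1 i) with h | h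
        · exact absurd h ‹¬ _›
        · exact h
      exact (hIMb (t i) (s i) (s j) (t j) i j hij (ht.1 i) (hs.1 i) (hs.1 j)
        (ht.1 j) hii ‹le j (s j) (t j)› (ht.2 i j hij) (hs.2 i j hij)).1
    · exact ht.2 i j hij
  -- fold over a list of cliques
  have key : ∀ l : List (I → V), (∀ K ∈ l, P K) → ∀ s, P s →
      ∃ m, P m ∧ (∀ i, le i (m i) (s i)) ∧ ∀ K ∈ l, ∀ i, le i (m i) (K i) := by
    intro l
    induction l with
    | nil =>
      intro _ s hs
      exact ⟨s, hs, fun i => le_refl i (s i) (hs.1 i), by simp⟩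
    | cons K l ih =>
      intro hl s hs
      have hK : P K := hl K (by simp)
      obtain ⟨m, hm, hms, hml⟩ :=
        ih (fun K' hK' => hl K' (List.mem_cons_of_mem _ hK')) (mn s K)
          (hmn_P s K hs hK)
      refine ⟨m, hm, ?_, ?_⟩
      · intro i
        exact le_trans i (m i) (mn s K i) (s i) (hm.1 i)
          (hmn_cl s K hs hK i) (hs.1 i) (hms i) (hmn_le_left s K hs hK i)
      · intro K' hK' i
        rcases List.mem_cons.mp hK' with rfl | hK'
        · exact le_trans i (m i) (mn s K' i) (K' i) (hm.1 i)
            (hmn_cl s K' hs hK i) (hK.1 i) (hms i) (hmn_le_right s K' hs hK i)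
        · exact hml K' hK' i
  obtain ⟨m, hm, _, hml⟩ := key (Finset.univ.filter P).toList
    (fun K hK => (Finset.mem_filter.mp (Finset.mem_toList.mp hK)).2) s₀ hs₀
  refine ⟨m, hm, fun K hKP i => ?_⟩
  exact hml K (Finset.mem_toList.mpr (Finset.mem_filter.mpr ⟨Finset.mem_univ _, hKP⟩)) i
end

section
/- Let G be a simple graph, let k be a natural number, and let P_G be the poset on V(G) × {0, 1, 2} with (v, a) ≤ (u, b) if and only if (v = u and a ≤ b) or (a = 0 and b = 2 and {v, u} ∈ E(G)). Then G has an independent set of size k (a set of k pairwise non-adjacent vertices) if and only if there exists an order embedding from the poset I_k into P_G. -/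
/-- The order relation of the poset `P_G` associated with a graph `G`. -/
def posetOfGraphLe {V : Type*} (G : SimpleGraph V)
    (x y : V × Fin 3) : Prop :=
  (x.1 = y.1 ∧ x.2 ≤ y.2) ∨ (x.2 = 0 ∧ y.2 = 2 ∧ G.Adj x.1 y.1)

/-- The order relation of the poset `I_k`: `k` mutually incomparable
three-element chains. -/
def IkLe (k : ℕ) (x y : Fin k × Fin 3) : Prop :=
  x.1 = y.1 ∧ x.2 ≤ y.2

/-- `G` has an independent set of size `k` iff there is an order
embedding from `I_k` into `P_G`. -/
theorem stmt11 {V : Type*} (G : SimpleGraph V) (k : ℕ) :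
    (∃ s : Finset V, s.card = k ∧
        ∀ u ∈ s, ∀ v ∈ s, u ≠ v → ¬ G.Adj u v)
    ↔ (∃ e : Fin k × Fin 3 → V × Fin 3, Function.Injective e ∧
        ∀ x y : Fin k × Fin 3, IkLe k x y ↔ posetOfGraphLe G (e x) (e y)) := by
  classical
  constructor
  · rintro ⟨s, hcard, hind⟩
    have equiv : Fin k ≃ s := (s.equivFin.trans (finCongr hcard)).symm
    set f : Fin k → V := fun i => (equiv i : V) with hf
    have hfinj : Function.Injective f := by
      intro i j hij
      exact equiv.injective (Subtype.ext hij)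
    have hmem : ∀ i, f i ∈ s := fun i => (equiv i).2
    refine ⟨fun x => (f x.1, x.2), ?_, ?_⟩
    · intro x y hxy
      have h1 := congrArg Prod.fst hxy
      have h2 := congrArg Prod.snd hxy
      simp only at h1 h2
      exact Prod.ext (hfinj h1) h2
    · intro x y
      unfold IkLe posetOfGraphLe
      simp only
      constructor
      · rintro ⟨h1, h2⟩
        exact Or.inl ⟨congrArg f h1, h2⟩
      · rintro (⟨h1, h2⟩ | ⟨h1, h2, h3⟩)
        · exact ⟨hfinj h1, h2⟩
        · by_cases hv : f x.1 = f y.1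
          · rw [hv] at h3; exact absurd h3 (G.irrefl)
          · exact absurd h3 (hind _ (hmem x.1) _ (hmem y.1) hv)
  · rintro ⟨e, hinj, he⟩
    set v : Fin k → V := fun i => (e (i, 0)).1 with hv
    -- claim: e (i, a) = (v i, a)
    have key : ∀ i a, e (i, a) = (v i, a) := by
      intro i a
      have h01 : posetOfGraphLe G (e (i, 0)) (e (i, 1)) :=
        (he (i, 0) (i, 1)).mp ⟨rfl, show (0:Fin 3) ≤ 1 by decide⟩
      have h12 : posetOfGraphLe G (e (i, 1)) (e (i, 2)) :=
        (he (i, 1) (i, 2)).mp ⟨rfl, show (1:Fin 3) ≤ 2 by decide⟩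
      have hne01 : e (i, (0:Fin 3)) ≠ e (i, 1) := fun h =>
        by simpa using (congrArg Prod.snd (hinj h))
      have hne12 : e (i, (1:Fin 3)) ≠ e (i, 2) := fun h =>
        by simpa using (congrArg Prod.snd (hinj h))
      rcases h01 with ⟨h1, h2⟩ | ⟨h1, h2, h3⟩
      · rcases h12 with ⟨h1', h2'⟩ | ⟨h1', h2', h3'⟩
        · -- chain: fsts equal, snds strictly increasing
          have hlt1 : (e (i, (0:Fin 3))).2 < (e (i, 1)).2 := by
            rcases lt_or_eq_of_le h2 with h | h
            · exact h
            · exact absurd (Prod.ext h1 h) hne01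
          have hlt2 : (e (i, (1:Fin 3))).2 < (e (i, 2)).2 := by
            rcases lt_or_eq_of_le h2' with h | h
            · exact h
            · exact absurd (Prod.ext h1' h) hne12
          have e0 : (e (i, (0:Fin 3))).2 = 0 := by omega
          have e1 : (e (i, (1:Fin 3))).2 = 1 := by omega
          have e2 : (e (i, (2:Fin 3))).2 = 2 := by omega
          fin_cases a
          · exact Prod.ext rfl e0
          · exact Prod.ext h1.symm e1
          · exact Prod.ext (h1.trans h1').symm e2
        · -- e(i,1).2 = 0, but e(i,0).2 ≤ e(i,1).2 and same fst ⇒ e(i,0)=e(i,1)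
          exact absurd (Prod.ext h1 (by omega)) hne01
      · rcases h12 with ⟨h1', h2'⟩ | ⟨h1', h2', h3'⟩
        · -- e(i,1).2 = 2 ≤ e(i,2).2 ⇒ e(i,2).2 = 2, same fst ⇒ e(i,1)=e(i,2)
          exact absurd (Prod.ext h1' (by omega)) hne12
        · rw [h2] at h1'; exact absurd h1' (by decide)
    have hvinj : Function.Injective v := by
      intro i j hij
      have h : posetOfGraphLe G (e (i, 0)) (e (j, 1)) := by
        rw [key, key]
        exact Or.inl ⟨hij, show (0:Fin 3) ≤ 1 by decide⟩
      exact ((he (i, 0) (j, 1)).mpr h).1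
    refine ⟨Finset.univ.image v, ?_, ?_⟩
    · rw [Finset.card_image_of_injective _ hvinj, Finset.card_univ, Fintype.card_fin]
    · intro a ha b hb hab hadj
      simp only [Finset.mem_image, Finset.mem_univ, true_and] at ha hb
      obtain ⟨i, rfl⟩ := ha
      obtain ⟨j, rfl⟩ := hb
      have hij : i ≠ j := fun h => hab (congrArg v h)
      have h : posetOfGraphLe G (e (i, 0)) (e (j, 2)) := by
        rw [key, key]
        exact Or.inr ⟨rfl, rfl, hadj⟩
      exact hij ((he (i, 0) (j, 2)).mpr h).1
end

section
/- Let P be a poset and let k, k' be natural numbers with k' ≤ k. Then there exists an order embedding from I_k into the disjoint union P ⊔ I_{k−k'} if and only if there exists an order embedding from I_{k'} into P. -/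
/-- for `k' ≤ k`, the poset `I_k` order-embeds into the disjoint
union `P ⊔ I_{k - k'}` iff `I_{k'}` order-embeds into `P`. The disjoint-union
order on `P ⊕ (Fin (k - k') × Fin 3)` is `Sum.LiftRel (· ≤ ·) (IkLe (k - k'))`. -/
theorem stmt16 {P : Type*} [PartialOrder P] (k k' : ℕ) (hk : k' ≤ k) :
    (∃ e : Fin k × Fin 3 → P ⊕ (Fin (k - k') × Fin 3), Function.Injective e ∧
        ∀ x y : Fin k × Fin 3,
          IkLe k x y ↔ Sum.LiftRel (· ≤ ·) (IkLe (k - k')) (e x) (e y))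
    ↔ (∃ e : Fin k' × Fin 3 → P, Function.Injective e ∧
        ∀ x y : Fin k' × Fin 3, IkLe k' x y ↔ e x ≤ e y) := by
  classical
  constructor
  · rintro ⟨e, einj, hord⟩
    -- if a chain's bottom element goes to the left, the whole chain goes left
    have sameL : ∀ i : Fin k, ∀ a : Fin 3, (e (i, 0)).isLeft →
        ∃ p, e (i, a) = Sum.inl p := by
      intro i a h
      have h0a : IkLe k (i, 0) (i, a) := ⟨rfl, Fin.zero_le a⟩
      have hl := (hord _ _).1 h0a
      cases he0 : e (i, (0 : Fin 3)) with
      | inl p =>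
        cases hea : e (i, a) with
        | inl q => exact ⟨q, rfl⟩
        | inr q => rw [he0, hea] at hl; cases hl
      | inr p => rw [he0] at h; simp at h
    have sameR : ∀ i : Fin k, (e (i, 0)).isRight →
        ∃ p, e (i, (1 : Fin 3)) = Sum.inr p := by
      intro i h
      have h01 : IkLe k (i, 0) (i, 1) := ⟨rfl, Fin.zero_le _⟩
      have hl := (hord _ _).1 h01
      cases he0 : e (i, (0 : Fin 3)) with
      | inl p => rw [he0] at h; simp at h
      | inr p =>
        cases he1 : e (i, (1 : Fin 3)) with
        | inl q => rw [he0, he1] at hl; cases hl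
        | inr q => exact ⟨q, rfl⟩
    set S : Finset (Fin k) :=
      Finset.univ.filter (fun i => (e (i, (0 : Fin 3))).isRight) with hSdef
    -- the index of the right-side chain, as a natural number
    set f : Fin k → ℕ :=
      fun i => Sum.elim (fun _ => 0) (fun p => (p.1 : ℕ)) (e (i, (1 : Fin 3)))
      with hfdef
    have hcard : S.card ≤ k - k' := by
      have := Finset.card_le_card_of_injOn (s := S) f
        (t := Finset.range (k - k')) ?_ ?_
      · simpa using this
      · intro i hi
        obtain ⟨p, hp⟩ := sameR i (by simpa [hSdef] using hi)
        simp [hfdef, hp, Finset.mem_range, p.1.isLt]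
      · intro i hi i' hi' hf
        obtain ⟨p, hp⟩ := sameR i (by simpa [hSdef] using hi)
        obtain ⟨p', hp'⟩ := sameR i' (by simpa [hSdef] using hi')
        rw [hfdef] at hf
        simp only [hp, hp', Sum.elim_inr] at hf
        have hp1 : p.1 = p'.1 := Fin.ext hf
        rcases le_total p.2 p'.2 with hle | hle
        · have : Sum.LiftRel (· ≤ ·) (IkLe (k - k'))
              (e (i, (1 : Fin 3))) (e (i', (1 : Fin 3))) := by
            rw [hp, hp']; exact Sum.LiftRel.inr ⟨hp1, hle⟩
          exact ((hord _ _).2 this).1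
        · have : Sum.LiftRel (· ≤ ·) (IkLe (k - k'))
              (e (i', (1 : Fin 3))) (e (i, (1 : Fin 3))) := by
            rw [hp, hp']; exact Sum.LiftRel.inr ⟨hp1.symm, hle⟩
          exact ((hord _ _).2 this).1.symm
    obtain ⟨g⟩ : Nonempty (Fin k' ↪ {i // i ∈ Sᶜ}) := by
      apply Function.Embedding.nonempty_of_card_le
      have hSk : S.card ≤ k := by
        simpa using Finset.card_le_card (Finset.subset_univ S)
      simp only [Fintype.card_coe, Fintype.card_fin, Finset.card_compl,
        Fintype.card_fin]
      omega
    have hgmem : ∀ i : Fin k', ∀ a : Fin 3, ∃ p, e ((g i).1, a) = Sum.inl p := by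
      intro i a
      apply sameL
      have := (g i).2
      simp only [Finset.mem_compl, hSdef, Finset.mem_filter, Finset.mem_univ,
        true_and] at this
      cases he : e ((g i).1, (0 : Fin 3)) with
      | inl p => simp
      | inr p => rw [he] at this; simp at this
    set e'' : Fin k' × Fin 3 → P := fun x => (hgmem x.1 x.2).choose with he''def
    have hspec : ∀ x : Fin k' × Fin 3, e ((g x.1).1, x.2) = Sum.inl (e'' x) :=
      fun x => (hgmem x.1 x.2).choose_spec
    have hg1inj : ∀ i i' : Fin k', (g i).1 = (g i').1 → i = i' := by
      intro i i' h
      exact g.injective (Subtype.ext h)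
    refine ⟨e'', ?_, ?_⟩
    · intro x y hxy
      have : e ((g x.1).1, x.2) = e ((g y.1).1, y.2) := by
        rw [hspec, hspec, hxy]
      have h2 := einj this
      rw [Prod.mk.injEq] at h2
      exact Prod.ext (hg1inj _ _ h2.1) h2.2
    · intro x y
      have step : IkLe k' x y ↔ IkLe k ((g x.1).1, x.2) ((g y.1).1, y.2) := by
        constructor
        · rintro ⟨h1, h2⟩; exact ⟨by rw [h1], h2⟩
        · rintro ⟨h1, h2⟩; exact ⟨hg1inj _ _ h1, h2⟩
      rw [step, hord]
      rw [hspec, hspec]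
      simp
  · rintro ⟨e, einj, hord⟩
    refine ⟨fun x => if h : (x.1 : ℕ) < k' then Sum.inl (e (⟨x.1, h⟩, x.2))
      else Sum.inr (⟨x.1 - k', by have := x.1.isLt; omega⟩, x.2), ?_, ?_⟩
    · rintro ⟨i, a⟩ ⟨j, b⟩ h
      dsimp only at h
      by_cases hi : (i : ℕ) < k' <;> by_cases hj : (j : ℕ) < k' <;>
        simp only [hi, hj, dif_pos, dif_neg, not_false_iff] at h
      · have h2 := einj (Sum.inl.inj h)
        rw [Prod.mk.injEq] at h2
        have h3 : (i : ℕ) = j := by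
          have := congrArg Fin.val h2.1
          simpa using this
        exact Prod.ext (Fin.ext h3) h2.2
      · exact absurd h (by simp)
      · exact absurd h (by simp)
      · have h2 := Sum.inr.inj h
        rw [Prod.mk.injEq] at h2
        have h3 : (i : ℕ) - k' = (j : ℕ) - k' := by
          have := congrArg Fin.val h2.1
          simpa using this
        have h4 : (i : ℕ) = j := by omega
        simp [Prod.ext_iff, Fin.ext_iff, h4, h2.2]
    · rintro ⟨i, a⟩ ⟨j, b⟩
      dsimp only
      by_cases hi : (i : ℕ) < k' <;> by_cases hj : (j : ℕ) < k' <;>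
        simp only [hi, hj, dif_pos, dif_neg, not_false_iff]
      · rw [Sum.liftRel_inl_inl, ← hord]
        simp only [IkLe, Fin.ext_iff, Fin.val_mk]
      · simp only [IkLe, Fin.ext_iff]
        constructor
        · rintro ⟨h1, h2⟩; omega
        · intro h; cases h
      · simp only [IkLe, Fin.ext_iff]
        constructor
        · rintro ⟨h1, h2⟩; omega
        · intro h; cases h
      · rw [Sum.liftRel_inr_inr]
        simp only [IkLe, Fin.ext_iff, Fin.val_mk]
        constructor
        · rintro ⟨h1, h2⟩; exact ⟨by omega, h2⟩
        · rintro ⟨h1, h2⟩; exact ⟨by omega, h2⟩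
end
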